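/- Let A₁, …, A_m be nonnegative n×n real matrices and α₁, …, α_m > 0 with α := Σα_j ≥ 1, and let B_i be the Hadamard weighted geometric mean of the cyclic shift starting at i and P_j = A_j ⋯ A_m A₁ ⋯ A_{j-1}. Then ρ(B₁B₂⋯B_m) ≤ ρ(P₁^{(α₁)} ∘ ⋯ ∘ P_m^{(α_m)}) ≤ ρ(A₁A₂⋯A_m)^α. -/

import Mathlib

open Matrix

/-- Spectral radius of a real matrix: max modulus of its (complex) eigenvalues. -/
noncomputable def specRad {N : Type*} [Fintype N] [DecidableEq N] (A : Matrix N N ℝ) : ℝ :=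
  (spectralRadius ℂ (A.map Complex.ofReal)).toReal

/-- Operator norm induced by the Euclidean (ℓ²) norm. -/
noncomputable def l2OpNorm {N : Type*} [Fintype N] [DecidableEq N] (A : Matrix N N ℝ) : ℝ :=
  ‖Matrix.toEuclideanCLM (𝕜 := ℝ) A‖

/-- Entrywise α-th power (with the convention 0^0 = 1, as for `Real.rpow`). -/
noncomputable def hadPow {N : Type*} (A : Matrix N N ℝ) (α : ℝ) : Matrix N N ℝ :=
  fun i j => A i j ^ α

/-- `B_i`: Hadamard weighted geometric mean of the cyclic shift starting at `i`. -/
noncomputable def cycGeo {m : ℕ} {N : Type*} (A : Fin m → Matrix N N ℝ) (α : Fin m → ℝ)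
    (i : Fin m) : Matrix N N ℝ :=
  fun x y => ∏ k, (A (i + k) x y) ^ (α k)

/-- `P_j = A_j A_{j+1} ⋯ A_m A₁ ⋯ A_{j-1}`, the cyclic product starting at `j`. -/
noncomputable def cycProd {m : ℕ} {N : Type*} [Fintype N] [DecidableEq N]
    (A : Fin m → Matrix N N ℝ) (j : Fin m) : Matrix N N ℝ :=
  (List.ofFn fun k => A (j + k)).prod

/-!
Both inequalities rest on Hölder's inequality for weights of total mass `σ = ∑ αₖ ≥ 1`, which
makes the weighted Hadamard geometric mean entrywise super-multiplicative on nonnegative matrices: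
`(∘ₖ Xₖ^(αₖ)) (∘ₖ Yₖ^(αₖ)) ≤ ∘ₖ (Xₖ Yₖ)^(αₖ)`. Applied to the cyclic shifts this gives
`B₁ ⋯ Bₘ ≤ ∘ₖ Pₖ^(αₖ)` entrywise, and the spectral radius is monotone on nonnegative matrices.
For the second inequality, `(∘ₖ Pₖ^(αₖ))^r ≤ ∘ₖ (Pₖ^r)^(αₖ)`, and in the `ℓ∞` operator norm
(the maximal row sum) Hölder bounds the norm of the right side by `∏ₖ ‖Pₖ^r‖^αₖ`. Gelfand's
formula turns this into `ρ(∘ₖ Pₖ^(αₖ)) ≤ ∏ₖ ρ(Pₖ)^αₖ`, and every `Pₖ` has the spectral radius of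
`A₁ ⋯ Aₘ` because `ρ(XY) = ρ(YX)`.
-/

open Finset Filter Topology

theorem geom_mean_le_arith_mean_weighted_of_le_one {ι : Type*} [Fintype ι] {w z : ι → ℝ}
    (hw : ∀ i, 0 ≤ w i) (hsum : 1 ≤ ∑ i, w i) (hz₀ : ∀ i, 0 ≤ z i) (hz₁ : ∀ i, z i ≤ 1) :
    ∏ i, z i ^ w i ≤ ∑ i, w i / (∑ i, w i) * z i := by
  have hσ : 0 < ∑ i, w i := one_pos.trans_le hsum
  calc ∏ i, z i ^ w i ≤ ∏ i, z i ^ (w i / ∑ i, w i) := by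
        refine prod_le_prod (fun i _ => Real.rpow_nonneg (hz₀ i) _) fun i _ => ?_
        exact Real.rpow_le_rpow_of_exponent_ge' (hz₀ i) (hz₁ i) (div_nonneg (hw i) hσ.le)
          (div_le_self (hw i) hsum)
    _ ≤ ∑ i, w i / (∑ i, w i) * z i :=
        Real.geom_mean_le_arith_mean_weighted _ _ _ (fun i _ => div_nonneg (hw i) hσ.le)
          (by rw [← sum_div, div_self hσ.ne']) fun i _ => hz₀ i

theorem sum_prod_rpow_le_prod_rpow_sum {ι J : Type*} [Fintype ι] (s : Finset J)
    {f : ι → J → ℝ} (hf : ∀ k j, 0 ≤ f k j) {α : ι → ℝ} (hα : ∀ k, 0 < α k)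
    (hsum : 1 ≤ ∑ k, α k) :
    ∑ j ∈ s, ∏ k, f k j ^ α k ≤ ∏ k, (∑ j ∈ s, f k j) ^ α k := by
  set S : ι → ℝ := fun k => ∑ j ∈ s, f k j
  by_cases hS : ∃ k, S k = 0
  · obtain ⟨k₀, hk₀⟩ := hS
    have hf₀ : ∀ j ∈ s, f k₀ j = 0 := (sum_eq_zero_iff_of_nonneg fun j _ => hf k₀ j).1 hk₀
    rw [sum_eq_zero fun j hj => prod_eq_zero (mem_univ k₀)
      (by rw [hf₀ j hj, Real.zero_rpow (hα k₀).ne'])]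
    exact prod_nonneg fun k _ => Real.rpow_nonneg (sum_nonneg fun j _ => hf k j) _
  push Not at hS
  have hSpos : ∀ k, 0 < S k := fun k => (sum_nonneg fun j _ => hf k j).lt_of_ne' (hS k)
  have hnormalize : ∀ j, ∏ k, f k j ^ α k = (∏ k, S k ^ α k) * ∏ k, (f k j / S k) ^ α k := by
    intro j
    rw [← prod_mul_distrib]
    refine prod_congr rfl fun k _ => ?_
    rw [Real.div_rpow (hf k j) (hSpos k).le,
      mul_div_cancel₀ _ (Real.rpow_pos_of_pos (hSpos k) _).ne']
  have hle_one : ∀ k, ∀ j ∈ s, f k j / S k ≤ 1 := fun k j hj =>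
    (div_le_one (hSpos k)).2 (single_le_sum (fun j _ => hf k j) hj)
  have hS_sum : ∀ k, ∑ j ∈ s, f k j / S k = 1 := fun k => by
    rw [← sum_div]; exact div_self (hSpos k).ne'
  calc ∑ j ∈ s, ∏ k, f k j ^ α k
      = (∏ k, S k ^ α k) * ∑ j ∈ s, ∏ k, (f k j / S k) ^ α k := by
        rw [mul_sum]; exact sum_congr rfl fun j _ => hnormalize j
    _ ≤ (∏ k, S k ^ α k) * ∑ j ∈ s, ∑ k, α k / (∑ k, α k) * (f k j / S k) := by
        gcongr with j hj
        · exact prod_nonneg fun k _ => (Real.rpow_pos_of_pos (hSpos k) _).le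
        exact geom_mean_le_arith_mean_weighted_of_le_one (fun k => (hα k).le) hsum
          (fun k => div_nonneg (hf k j) (hSpos k).le) fun k => hle_one k j hj
    _ = ∏ k, S k ^ α k := by
        rw [sum_comm]
        simp_rw [← mul_sum, hS_sum, mul_one, ← sum_div, div_self (one_pos.trans_le hsum).ne',
          mul_one]

namespace Matrix

section EntrywiseOrder

variable {l m n : Type*}

theorem mul_entry_nonneg [Fintype m] {X : Matrix l m ℝ} {Y : Matrix m n ℝ}
    (hX : ∀ i j, 0 ≤ X i j) (hY : ∀ i j, 0 ≤ Y i j) (i : l) (j : n) : 0 ≤ (X * Y) i j :=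
  sum_nonneg fun k _ => mul_nonneg (hX i k) (hY k j)

theorem mul_entry_le_mul_entry [Fintype m] {X X' : Matrix l m ℝ} {Y Y' : Matrix m n ℝ}
    (hX : ∀ i j, 0 ≤ X i j) (hY : ∀ i j, 0 ≤ Y i j) (hXX' : ∀ i j, X i j ≤ X' i j)
    (hYY' : ∀ i j, Y i j ≤ Y' i j) (i : l) (j : n) : (X * Y) i j ≤ (X' * Y') i j :=
  sum_le_sum fun k _ => mul_le_mul (hXX' i k) (hYY' k j) (hY k j) ((hX i k).trans (hXX' i k))

theorem one_entry_nonneg [DecidableEq n] (i j : n) : 0 ≤ (1 : Matrix n n ℝ) i j := by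
  rw [one_apply]; split_ifs <;> norm_num

variable [Fintype n] [DecidableEq n]

theorem list_prod_entry_nonneg {L : List (Matrix n n ℝ)} (hL : ∀ X ∈ L, ∀ i j, 0 ≤ X i j)
    (i j : n) : 0 ≤ L.prod i j := by
  induction L generalizing i j with
  | nil => exact one_entry_nonneg i j
  | cons X L ih =>
    exact mul_entry_nonneg (hL X List.mem_cons_self)
      (ih fun Y hY => hL Y (List.mem_cons_of_mem _ hY)) i j

theorem pow_entry_nonneg {X : Matrix n n ℝ} (hX : ∀ i j, 0 ≤ X i j) (k : ℕ) (i j : n) :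
    0 ≤ (X ^ k) i j := by
  rw [← List.prod_replicate]
  exact list_prod_entry_nonneg (fun Y hY => List.eq_of_mem_replicate hY ▸ hX) i j

theorem pow_entry_le_pow_entry {X Y : Matrix n n ℝ} (hX : ∀ i j, 0 ≤ X i j)
    (hXY : ∀ i j, X i j ≤ Y i j) (k : ℕ) (i j : n) : (X ^ k) i j ≤ (Y ^ k) i j := by
  induction k generalizing i j with
  | zero => rfl
  | succ k ih =>
    rw [pow_succ, pow_succ]
    exact mul_entry_le_mul_entry (pow_entry_nonneg hX k) hX ih hXY i j

end EntrywiseOrder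

section HadamardGeomMean

variable {ι : Type*} [Fintype ι]

noncomputable def hadamardGeomMean {m n : Type*} (α : ι → ℝ) (X : ι → Matrix m n ℝ) :
    Matrix m n ℝ :=
  fun i j => ∏ k, X k i j ^ α k

variable {α : ι → ℝ}

theorem hadamardGeomMean_entry_nonneg {m n : Type*} {X : ι → Matrix m n ℝ}
    (hX : ∀ k i j, 0 ≤ X k i j) (i : m) (j : n) : 0 ≤ hadamardGeomMean α X i j :=
  prod_nonneg fun k _ => Real.rpow_nonneg (hX k i j) _

theorem hadamardGeomMean_mul_le {l m n : Type*} [Fintype m] (hα : ∀ k, 0 < α k)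
    (hsum : 1 ≤ ∑ k, α k) {X : ι → Matrix l m ℝ} {Y : ι → Matrix m n ℝ}
    (hX : ∀ k i j, 0 ≤ X k i j) (hY : ∀ k i j, 0 ≤ Y k i j) (i : l) (j : n) :
    (hadamardGeomMean α X * hadamardGeomMean α Y) i j ≤
      hadamardGeomMean α (fun k => X k * Y k) i j := by
  calc (hadamardGeomMean α X * hadamardGeomMean α Y) i j
      = ∑ r, ∏ k, (X k i r * Y k r j) ^ α k := by
        simp only [mul_apply, hadamardGeomMean, ← prod_mul_distrib,
          Real.mul_rpow (hX _ i _) (hY _ _ j)]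
    _ ≤ ∏ k, (∑ r, X k i r * Y k r j) ^ α k :=
        sum_prod_rpow_le_prod_rpow_sum _ (fun k r => mul_nonneg (hX k i r) (hY k r j)) hα hsum
    _ = hadamardGeomMean α (fun k => X k * Y k) i j := rfl

variable {N : Type*} [Fintype N] [DecidableEq N]

theorem list_prod_map_hadamardGeomMean_le (hα : ∀ k, 0 < α k) (hsum : 1 ≤ ∑ k, α k)
    {L : List (ι → Matrix N N ℝ)} (hL : ∀ X ∈ L, ∀ k i j, 0 ≤ X k i j) (i j : N) :
    (L.map (hadamardGeomMean α)).prod i j ≤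
      hadamardGeomMean α (fun k => (L.map (· k)).prod) i j := by
  induction L generalizing i j with
  | nil =>
    rcases eq_or_ne i j with rfl | hij
    · simp [hadamardGeomMean]
    · simpa [one_apply_ne hij] using
        hadamardGeomMean_entry_nonneg (α := α) (fun _ => one_entry_nonneg) i j
  | cons X L ih =>
    have hX := hL X List.mem_cons_self
    have hL' : ∀ Y ∈ L, ∀ k i j, 0 ≤ Y k i j := fun Y hY => hL Y (List.mem_cons_of_mem _ hY)
    have hmeans : ∀ i j, 0 ≤ (L.map (hadamardGeomMean α)).prod i j :=
      list_prod_entry_nonneg (by simpa using fun Y hY => hadamardGeomMean_entry_nonneg (hL' Y hY))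
    have hprods : ∀ k i j, 0 ≤ (L.map (· k)).prod i j := fun k =>
      list_prod_entry_nonneg (by simpa using fun Y hY => hL' Y hY k)
    simp only [List.map_cons, List.prod_cons]
    calc (hadamardGeomMean α X * (L.map (hadamardGeomMean α)).prod) i j
        ≤ (hadamardGeomMean α X * hadamardGeomMean α (fun k => (L.map (· k)).prod)) i j :=
          mul_entry_le_mul_entry (hadamardGeomMean_entry_nonneg hX) hmeans (fun _ _ => le_rfl)
            (ih hL') i j
      _ ≤ _ := hadamardGeomMean_mul_le hα hsum hX hprods i j

theorem hadamardGeomMean_pow_le (hα : ∀ k, 0 < α k) (hsum : 1 ≤ ∑ k, α k)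
    {X : ι → Matrix N N ℝ} (hX : ∀ k i j, 0 ≤ X k i j) (r : ℕ) (i j : N) :
    (hadamardGeomMean α X ^ r) i j ≤ hadamardGeomMean α (fun k => X k ^ r) i j := by
  simpa [List.map_replicate, List.prod_replicate] using
    list_prod_map_hadamardGeomMean_le hα hsum (L := List.replicate r X)
      (fun Y hY => List.eq_of_mem_replicate hY ▸ hX) i j

end HadamardGeomMean


section LinftyOpNorm

open scoped Matrix.Norms.Operator

variable {m n : Type*} [Fintype m] [Fintype n]

theorem linfty_opNorm_le_iff {A : Matrix m n ℝ} {c : ℝ} (hc : 0 ≤ c) :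
    ‖A‖ ≤ c ↔ ∀ i, ∑ j, ‖A i j‖ ≤ c := by
  lift c to NNReal using hc
  simp only [← coe_nnnorm, NNReal.coe_le_coe, linfty_opNNNorm_def, Finset.sup_le_iff,
    mem_univ, true_implies, ← NNReal.coe_sum]

theorem linfty_opNorm_mono_of_entry_le {X Y : Matrix m n ℝ} (hX : ∀ i j, 0 ≤ X i j)
    (hXY : ∀ i j, X i j ≤ Y i j) : ‖X‖ ≤ ‖Y‖ := by
  refine (linfty_opNorm_le_iff (norm_nonneg Y)).2 fun i => ?_
  calc ∑ j, ‖X i j‖ ≤ ∑ j, ‖Y i j‖ := sum_le_sum fun j _ => by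
        rw [Real.norm_of_nonneg (hX i j), Real.norm_of_nonneg ((hX i j).trans (hXY i j))]
        exact hXY i j
    _ ≤ ‖Y‖ := (linfty_opNorm_le_iff (norm_nonneg Y)).1 le_rfl i

theorem linfty_opNorm_hadamardGeomMean_le {ι : Type*} [Fintype ι] {α : ι → ℝ}
    (hα : ∀ k, 0 < α k) (hsum : 1 ≤ ∑ k, α k) {X : ι → Matrix m n ℝ}
    (hX : ∀ k i j, 0 ≤ X k i j) : ‖hadamardGeomMean α X‖ ≤ ∏ k, ‖X k‖ ^ α k := by
  refine (linfty_opNorm_le_iff (prod_nonneg fun k _ => by positivity)).2 fun i => ?_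
  calc ∑ j, ‖hadamardGeomMean α X i j‖ = ∑ j, ∏ k, X k i j ^ α k :=
        sum_congr rfl fun j _ => Real.norm_of_nonneg (hadamardGeomMean_entry_nonneg hX i j)
    _ ≤ ∏ k, (∑ j, X k i j) ^ α k := sum_prod_rpow_le_prod_rpow_sum _ (fun k => hX k i) hα hsum
    _ ≤ ∏ k, ‖X k‖ ^ α k := by
        have hrow : ∀ k, 0 ≤ ∑ j, X k i j := fun k => sum_nonneg fun j _ => hX k i j
        refine prod_le_prod (fun k _ => Real.rpow_nonneg (hrow k) _) fun k _ => ?_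
        refine Real.rpow_le_rpow (hrow k) ?_ (hα k).le
        calc ∑ j, X k i j = ∑ j, ‖X k i j‖ :=
              sum_congr rfl fun j _ => (Real.norm_of_nonneg (hX k i j)).symm
          _ ≤ ‖X k‖ := (linfty_opNorm_le_iff (norm_nonneg _)).1 le_rfl i

theorem linfty_opNNNorm_map_ofReal (A : Matrix m n ℝ) : ‖A.map ((↑) : ℝ → ℂ)‖₊ = ‖A‖₊ := by
  simp only [linfty_opNNNorm_def, map_apply, Complex.nnnorm_real]

end LinftyOpNorm

end Matrix

theorem spectrum.spectralRadius_mul_comm {𝕜 A : Type*} [NormedField 𝕜] [Ring A] [Algebra 𝕜 A]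
    (a b : A) : spectralRadius 𝕜 (a * b) = spectralRadius 𝕜 (b * a) := by
  suffices h : ∀ a b : A, spectralRadius 𝕜 (a * b) ≤ spectralRadius 𝕜 (b * a) from
    (h a b).antisymm (h b a)
  intro a b
  refine iSup₂_le fun k hk => ?_
  rcases eq_or_ne k 0 with rfl | hk0
  · simp
  · have : k ∈ spectrum 𝕜 (b * a) \ {0} := spectrum.nonzero_mul_comm (𝕜 := 𝕜) a b ▸ ⟨hk, hk0⟩
    exact le_iSup₂ (f := fun k (_ : k ∈ spectrum 𝕜 (b * a)) => (‖k‖₊ : ENNReal)) k this.1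

theorem spectrum.spectralRadius_ne_top {A : Type*} [NormedRing A] [NormedAlgebra ℂ A] [CompleteSpace A]
    (a : A) : spectralRadius ℂ a ≠ ⊤ :=
  ne_top_of_le_ne_top (by simp [ENNReal.mul_eq_top])
    (spectrum.spectralRadius_le_pow_nnnorm_pow_one_div ℂ a 0)

section SpecRad

open scoped Matrix.Norms.Operator

variable {N : Type*} [Fintype N] [DecidableEq N]

theorem specRad_nonneg (X : Matrix N N ℝ) : 0 ≤ specRad X := ENNReal.toReal_nonneg

theorem specRad_mul_comm (X Y : Matrix N N ℝ) : specRad (X * Y) = specRad (Y * X) := by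
  have hmap : ∀ Z : Matrix N N ℝ, Z.map Complex.ofReal = Complex.ofRealHom.mapMatrix Z :=
    fun _ => rfl
  simp only [specRad, hmap, map_mul, spectrum.spectralRadius_mul_comm]

theorem tendsto_norm_pow_rpow_specRad (X : Matrix N N ℝ) :
    Tendsto (fun n : ℕ => ‖X ^ n‖ ^ (1 / n : ℝ)) atTop (𝓝 (specRad X)) := by
  set Z : Matrix N N ℂ := Complex.ofRealHom.mapMatrix X
  have hZ : ∀ n : ℕ, ‖Z ^ n‖ = ‖X ^ n‖ := fun n => by
    rw [← map_pow, RingHom.mapMatrix_apply, ← coe_nnnorm, ← coe_nnnorm]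
    exact congrArg NNReal.toReal (linfty_opNNNorm_map_ofReal _)
  have h := (ENNReal.tendsto_toReal (spectrum.spectralRadius_ne_top Z)).comp
    (spectrum.pow_norm_pow_one_div_tendsto_nhds_spectralRadius Z)
  refine h.congr fun n => ?_
  rw [Function.comp_apply, hZ, ENNReal.toReal_ofReal (Real.rpow_nonneg (norm_nonneg _) _)]

theorem specRad_le_of_entry_le {X Y : Matrix N N ℝ} (hX : ∀ i j, 0 ≤ X i j)
    (hXY : ∀ i j, X i j ≤ Y i j) : specRad X ≤ specRad Y :=
  le_of_tendsto_of_tendsto' (tendsto_norm_pow_rpow_specRad X) (tendsto_norm_pow_rpow_specRad Y)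
    fun r => by
      gcongr
      exact linfty_opNorm_mono_of_entry_le (pow_entry_nonneg hX r)
        (pow_entry_le_pow_entry hX hXY r)

theorem specRad_hadamardGeomMean_le {ι : Type*} [Fintype ι] {α : ι → ℝ} (hα : ∀ k, 0 < α k)
    (hsum : 1 ≤ ∑ k, α k) {X : ι → Matrix N N ℝ} (hX : ∀ k i j, 0 ≤ X k i j) :
    specRad (hadamardGeomMean α X) ≤ ∏ k, specRad (X k) ^ α k := by
  have hbound : ∀ r : ℕ, ‖hadamardGeomMean α X ^ r‖ ^ (1 / r : ℝ) ≤
      ∏ k, (‖X k ^ r‖ ^ (1 / r : ℝ)) ^ α k := fun r =>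
    calc ‖hadamardGeomMean α X ^ r‖ ^ (1 / r : ℝ)
        ≤ ‖hadamardGeomMean α (fun k => X k ^ r)‖ ^ (1 / r : ℝ) := by
          gcongr
          exact linfty_opNorm_mono_of_entry_le
            (pow_entry_nonneg (hadamardGeomMean_entry_nonneg hX) r)
            (hadamardGeomMean_pow_le hα hsum hX r)
      _ ≤ (∏ k, ‖X k ^ r‖ ^ α k) ^ (1 / r : ℝ) := by
          gcongr
          exact linfty_opNorm_hadamardGeomMean_le hα hsum
            fun k => pow_entry_nonneg (hX k) r
      _ = ∏ k, (‖X k ^ r‖ ^ (1 / r : ℝ)) ^ α k := by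
          rw [← Real.finsetProd_rpow _ _ fun k _ => by positivity]
          refine prod_congr rfl fun k _ => ?_
          rw [← Real.rpow_mul (norm_nonneg _), ← Real.rpow_mul (norm_nonneg _), mul_comm]
  exact le_of_tendsto_of_tendsto' (tendsto_norm_pow_rpow_specRad _)
    (tendsto_finsetProd _ fun k _ =>
      (tendsto_norm_pow_rpow_specRad (X k)).rpow_const (Or.inr (hα k).le)) hbound

end SpecRad

section Cyclic

variable {m : ℕ}

theorem List.ofFn_add_left_eq_rotate {β : Type*} (A : Fin m → β) (k : Fin m) :
    List.ofFn (fun l => A (k + l)) = (List.ofFn A).rotate k := by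
  refine List.ext_getElem (by simp) fun i _ _ => ?_
  simp only [List.getElem_rotate, List.getElem_ofFn, List.length_ofFn]
  congr 1
  ext
  simp [Fin.add_def, add_comm]

theorem cycGeo_eq_hadamardGeomMean {N : Type*} (A : Fin m → Matrix N N ℝ) (α : Fin m → ℝ)
    (i : Fin m) : cycGeo A α i = hadamardGeomMean α fun k => A (i + k) :=
  rfl

variable {N : Type*} [Fintype N] [DecidableEq N]

theorem specRad_cycProd (A : Fin m → Matrix N N ℝ) (k : Fin m) :
    specRad (cycProd A k) = specRad (List.ofFn A).prod := by
  rw [cycProd, List.ofFn_add_left_eq_rotate,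
    List.rotate_eq_drop_append_take (by simp [k.isLt.le]), List.prod_append,
    specRad_mul_comm, ← List.prod_append, List.take_append_drop]

theorem list_prod_cycGeo_le {A : Fin m → Matrix N N ℝ} (hA : ∀ k i j, 0 ≤ A k i j)
    {α : Fin m → ℝ} (hα : ∀ k, 0 < α k) (hsum : 1 ≤ ∑ k, α k) (i j : N) :
    (List.ofFn (cycGeo A α)).prod i j ≤ hadamardGeomMean α (cycProd A) i j := by
  have h := list_prod_map_hadamardGeomMean_le hα hsum
    (L := List.ofFn fun i k => A (i + k)) (by simp [hA]) i j
  have hprods : (fun k => ((List.ofFn fun i k => A (i + k)).map (· k)).prod) = cycProd A := by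
    funext k
    simp only [List.map_ofFn, cycProd, Function.comp_def, add_comm k]
  rwa [hprods, List.map_ofFn, Function.comp_def, ← funext (cycGeo_eq_hadamardGeomMean A α)] at h

end Cyclic

theorem stmt10_general {m : ℕ} {N : Type*} [Fintype N] [DecidableEq N]
    (A : Fin m → Matrix N N ℝ) (hA : ∀ k, ∀ i j, 0 ≤ A k i j)
    (α : Fin m → ℝ) (hα : ∀ k, 0 < α k) (hsum : 1 ≤ ∑ k, α k) :
    specRad (List.ofFn (cycGeo A α)).prod ≤
        specRad (fun i j => ∏ k, (cycProd A k i j) ^ (α k)) ∧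
      specRad (fun i j => ∏ k, (cycProd A k i j) ^ (α k)) ≤
        specRad (List.ofFn A).prod ^ (∑ k, α k) := by
  have hB : ∀ i j, 0 ≤ (List.ofFn (cycGeo A α)).prod i j :=
    list_prod_entry_nonneg (by simpa [cycGeo_eq_hadamardGeomMean] using fun i =>
      hadamardGeomMean_entry_nonneg fun k => hA (i + k))
  have hP : ∀ k i j, 0 ≤ cycProd A k i j := fun k =>
    list_prod_entry_nonneg (by simp [hA])
  refine ⟨specRad_le_of_entry_le hB (list_prod_cycGeo_le hA hα hsum), ?_⟩
  calc specRad (hadamardGeomMean α (cycProd A))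
      ≤ ∏ k, specRad (cycProd A k) ^ α k := specRad_hadamardGeomMean_le hα hsum hP
    _ = specRad (List.ofFn A).prod ^ (∑ k, α k) := by
        simp only [specRad_cycProd]
        exact (Real.rpow_sum_of_nonneg (specRad_nonneg _) fun k _ => (hα k).le).symm

theorem stmt10 {m : ℕ} (hm : 0 < m) {N : Type*} [Fintype N] [DecidableEq N]
    (A : Fin m → Matrix N N ℝ) (hA : ∀ k, ∀ i j, 0 ≤ A k i j)
    (α : Fin m → ℝ) (hα : ∀ k, 0 < α k) (hsum : 1 ≤ ∑ k, α k) :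
    specRad (List.ofFn (cycGeo A α)).prod ≤
        specRad (fun i j => ∏ k, (cycProd A k i j) ^ (α k)) ∧
      specRad (fun i j => ∏ k, (cycProd A k i j) ^ (α k)) ≤
        specRad (List.ofFn A).prod ^ (∑ k, α k) :=
  stmt10_general A hA α hα hsum
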